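/- arXiv:2308.12948 — 2 statements merged into one kernel-verified Lean document; each statement's English description precedes it below -/
import Mathlib

section
/- Let k, ℓ, m ≥ 1 be integers and let d satisfy d > k + ℓ + m + 2 and d > 2·max(k, ℓ, m) + 2. Then for all z, a, b ∈ ℤ^d, ∑_{y,y'∈ℤ^d} (g(y)·g(y−y') + g(y')·g(y−y'))·F_{k,ℓ,m}(z, a+y, b+y') = F_{k+1,ℓ+1,m}(z,a,b) + F_{k+1,ℓ,m+1}(z,a,b). -/
open MeasureTheory ProbabilityTheory Filter Pointwise
open scoped ENNReal Topology

/-- Lattice points of `ℤ^d`. -/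
abbrev Zd (d : ℕ) := Fin d → ℤ

/-- Euclidean norm on `ℤ^d`. -/
noncomputable def znorm {d : ℕ} (x : Zd d) : ℝ := Real.sqrt (∑ i, ((x i : ℝ)) ^ 2)

/-- Euclidean diameter of a subset of `ℤ^d`. -/
noncomputable def zdiam {d : ℕ} (A : Set (Zd d)) : ℝ :=
  sSup ((fun p : Zd d × Zd d => znorm (p.1 - p.2)) '' (A ×ˢ A))

/-- The `2d` unit vectors `±e_1, …, ±e_d`. -/
def stepSet (d : ℕ) : Finset (Zd d) :=
  (Finset.univ.image fun i : Fin d => (Pi.single i 1 : Zd d)) ∪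
  (Finset.univ.image fun i : Fin d => (Pi.single i (-1) : Zd d))

/-- `walkP d n x` is the probability that a simple random walk started at `0`
is at `x` at time `n`. -/
noncomputable def walkP (d : ℕ) : ℕ → Zd d → ℝ≥0∞
  | 0, x => if x = 0 then 1 else 0
  | (n + 1), x => ((stepSet d).card : ℝ≥0∞)⁻¹ * ∑ s ∈ stepSet d, walkP d n (x - s)

/-- The Green's function `g(x) = ∑_{n ≥ 0} P(X_n = x)` of the simple random walk on `ℤ^d`. -/
noncomputable def green (d : ℕ) (x : Zd d) : ℝ≥0∞ := ∑' n, walkP d n x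

/-- `GreenK d k` is the `k`-fold convolution power of the Green's function `green d`. -/
noncomputable def GreenK (d : ℕ) : ℕ → Zd d → ℝ≥0∞
  | 0, x => if x = 0 then 1 else 0
  | (k + 1), x => ∑' y : Zd d, GreenK d k y * green d (x - y)

/-- The uniform distribution on the `2d` unit vectors, as a measure on `ℤ^d`. -/
noncomputable def stepMeasure (d : ℕ) : Measure (Zd d) :=
  ((stepSet d).card : ℝ≥0∞)⁻¹ • ∑ s ∈ stepSet d, Measure.dirac s

/-- `X` is a simple random walk on `ℤ^d` under the measure `P`: it starts at `0` and its
increments are i.i.d. uniform on the `2d` unit vectors. -/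
structure IsSRW {Ω : Type} [MeasurableSpace Ω] (P : Measure Ω) {d : ℕ}
    (X : ℕ → Ω → Zd d) : Prop where
  meas : ∀ n, Measurable (X n)
  init : ∀ᵐ ω ∂P, X 0 ω = 0
  indep : iIndepFun (fun n ω => X (n + 1) ω - X n ω) P
  ident : ∀ n, P.map (fun ω => X (n + 1) ω - X n ω) = stepMeasure d

/-- A family of `N` independent simple random walks on `ℤ^d`. -/
def IndepSRWs {Ω : Type} [MeasurableSpace Ω] (P : Measure Ω) {d N : ℕ}
    (X : Fin N → ℕ → Ω → Zd d) : Prop :=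
  (∀ i, IsSRW P (X i)) ∧ iIndepFun (fun i ω => fun n => X i n ω) P

/-- The range `{X_0, …, X_n}` of a walk up to time `n`. -/
def rangeTo {Ω : Type} {d : ℕ} (X : ℕ → Ω → Zd d) (n : ℕ) (ω : Ω) : Set (Zd d) :=
  {y | ∃ k ≤ n, X k ω = y}

/-- The total range `{X_n : n ≥ 0}` of a walk. -/
def rangeInf {Ω : Type} {d : ℕ} (X : ℕ → Ω → Zd d) (ω : Ω) : Set (Zd d) :=
  {y | ∃ k : ℕ, X k ω = y}

/-- Capacity of `A` with respect to a kernel `K`: the inverse of the infimum of the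
`K`-energies of probability measures supported on `A`. -/
noncomputable def capK {d : ℕ} (K : Zd d → Zd d → ℝ) (A : Set (Zd d)) : ℝ :=
  (sInf {E : ℝ | ∃ ν : Zd d → ℝ, (∀ x, 0 ≤ ν x) ∧ (∀ x ∉ A, ν x = 0) ∧
      (Function.support ν).Finite ∧ (∑ᶠ x, ν x = 1) ∧
      E = ∑ᶠ x, ∑ᶠ y, K x y * ν x * ν y})⁻¹

/-- The `γ`-capacity, associated with the kernel `(1 + ‖x - y‖)^{-γ}`. -/
noncomputable def capGamma {d : ℕ} (γ : ℝ) (A : Set (Zd d)) : ℝ :=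
  capK (fun x y => (1 + znorm (x - y)) ^ (-γ)) A

/-- The (Newtonian) capacity, associated with the Green's function kernel `g(y - x)`. -/
noncomputable def capGreen (d : ℕ) (A : Set (Zd d)) : ℝ :=
  capK (fun x y => (green d (y - x)).toReal) A

/-- Local time at `x` of the multiparameter process `z + X¹_{t₁} + ⋯ + X^N_{t_N}`. -/
noncomputable def localTime {Ω : Type} {d N : ℕ} (X : Fin N → ℕ → Ω → Zd d)
    (z x : Zd d) (ω : Ω) : ℝ≥0∞ :=
  ∑' t : Fin N → ℕ, if z + ∑ i, X i (t i) ω = x then 1 else 0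

/-- `F_{k,ℓ,m}(z,a,b) = ∑_w G_k(z-b+w) G_ℓ(w) G_m(a-b+w)`. -/
noncomputable def Fklm (d k l m : ℕ) (z a b : Zd d) : ℝ≥0∞ :=
  ∑' w : Zd d, GreenK d k (z - b + w) * GreenK d l w * GreenK d m (a - b + w)

/-- A double-sided simple random walk indexed by `ℤ`: both one-sided parts are simple
random walks, independent of each other. -/
structure IsTwoSidedSRW {Ω : Type} [MeasurableSpace Ω] (P : Measure Ω) {d : ℕ}
    (Y : ℤ → Ω → Zd d) : Prop where
  pos : IsSRW P (fun n ω => Y (n : ℤ) ω)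
  neg : IsSRW P (fun n ω => Y (-(n : ℤ)) ω)
  indep : IndepFun (fun ω => fun n : ℕ => Y (n : ℤ) ω) (fun ω => fun n : ℕ => Y (-(n : ℤ)) ω) P

/-- A family of `N` independent double-sided simple random walks. -/
def IndepTwoSidedSRWs {Ω : Type} [MeasurableSpace Ω] (P : Measure Ω) {d N : ℕ}
    (Y : Fin N → ℤ → Ω → Zd d) : Prop :=
  (∀ i, IsTwoSidedSRW P (Y i)) ∧
    iIndepFun (fun i ω => fun n : ℤ => Y i n ω) P

open Classical in
/-- `ℝ≥0∞`-valued indicator of a proposition. -/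
noncomputable def ind (p : Prop) : ℝ≥0∞ := if p then 1 else 0

/-! Since everything is `ℝ≥0∞`-valued, the identity is a rearrangement of nonnegative sums.
Substituting `w = b + v` gives `F_{k,ℓ,m}(z,a,b) = ∑_v G_k(z+v) G_ℓ(b+v) G_m(a+v)`; shifting
the `a`- and `b`-slots by `y` and `y'` and summing against `g(y) g(y-y')` is then a change of
variables that turns `G_k` and `G_ℓ` into their convolutions with `g`. The second term is the
first one with `(ℓ, b)` and `(m, a)` exchanged, which is where `g(-x) = g(x)` enters. -/

section TripleCorr

variable {G : Type*} [AddCommGroup G]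

noncomputable def conv (f g : G → ℝ≥0∞) (x : G) : ℝ≥0∞ := ∑' y, f y * g (x - y)

noncomputable def tripleCorr (A B C : G → ℝ≥0∞) (z a b : G) : ℝ≥0∞ :=
  ∑' v, A (z + v) * B (b + v) * C (a + v)

lemma tripleCorr_comm (A B C : G → ℝ≥0∞) (z a b : G) :
    tripleCorr A B C z a b = tripleCorr A C B z b a := by
  simp only [tripleCorr, mul_right_comm _ (B _)]

/-- `((y, y'), v) ↦ (v + y, z + v, b + v + y')`: the new summation variable, and the points at
which `A` and `B` are evaluated before they are convolved. -/
def shiftEquiv (z b : G) : (G × G) × G ≃ G × G × G where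
  toFun q := (q.2 + q.1.1, z + q.2, b + q.2 + q.1.2)
  invFun r := ((r.1 - r.2.1 + z, r.2.2 - b - r.2.1 + z), r.2.1 - z)
  left_inv := by
    rintro ⟨⟨y, y'⟩, v⟩
    simp only [Prod.mk.injEq]
    exact ⟨⟨by abel, by abel⟩, by abel⟩
  right_inv := by
    rintro ⟨v, u, t⟩
    simp only [Prod.mk.injEq]
    exact ⟨by abel, by abel, by abel⟩

lemma tsum_mul_tripleCorr_add_eq_conv_left_middle (p q A B C : G → ℝ≥0∞) (z a b : G) :
    ∑' y : G × G, p y.1 * q (y.1 - y.2) * tripleCorr A B C z (a + y.1) (b + y.2)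
      = tripleCorr (conv A p) (conv B q) C z a b := by
  set f : G × G × G → ℝ≥0∞ := fun r =>
    A r.2.1 * p (z + r.1 - r.2.1) * (B r.2.2 * q (b + r.1 - r.2.2)) * C (a + r.1)
  have hlhs : ∑' y : G × G, p y.1 * q (y.1 - y.2) * tripleCorr A B C z (a + y.1) (b + y.2)
      = ∑' x, f (shiftEquiv z b x) := by
    rw [ENNReal.tsum_prod' (f := fun x => f (shiftEquiv z b x))]
    refine tsum_congr fun y => ?_
    rw [tripleCorr, ← ENNReal.tsum_mul_left (α := G)]
    refine tsum_congr fun v => ?_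
    simp only [f, shiftEquiv, Equiv.coe_fn_mk]
    rw [show z + (v + y.1) - (z + v) = y.1 by abel, show a + (v + y.1) = a + y.1 + v by abel,
      show b + (v + y.1) - (b + v + y.2) = y.1 - y.2 by abel,
      show b + v + y.2 = b + y.2 + v by abel]
    ring
  have hrhs : ∑' r, f r = tripleCorr (conv A p) (conv B q) C z a b := by
    rw [ENNReal.tsum_prod']
    refine tsum_congr fun v => ?_
    rw [ENNReal.tsum_prod', conv, conv, ← ENNReal.tsum_mul_right (α := G),
      ← ENNReal.tsum_mul_right (α := G)]
    refine tsum_congr fun u => ?_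
    rw [← ENNReal.tsum_mul_left (α := G), ← ENNReal.tsum_mul_right (α := G)]
  rw [hlhs, Equiv.tsum_eq, hrhs]

lemma tsum_mul_tripleCorr_add_eq_conv_left_right (p q A B C : G → ℝ≥0∞) (z a b : G) :
    ∑' y : G × G, p y.2 * q (y.2 - y.1) * tripleCorr A B C z (a + y.1) (b + y.2)
      = tripleCorr (conv A p) B (conv C q) z a b := by
  rw [tripleCorr_comm, ← tsum_mul_tripleCorr_add_eq_conv_left_middle,
    ← (Equiv.prodComm G G).tsum_eq]
  simp only [Equiv.prodComm_apply, Prod.fst_swap, Prod.snd_swap, tripleCorr_comm A B C]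

end TripleCorr

lemma neg_mem_stepSet {d : ℕ} {s : Zd d} (h : s ∈ stepSet d) : -s ∈ stepSet d := by
  simp only [stepSet, Finset.mem_union, Finset.mem_image, Finset.mem_univ, true_and] at h ⊢
  rcases h with ⟨i, rfl⟩ | ⟨i, rfl⟩
  · exact Or.inr ⟨i, by rw [Pi.single_neg]⟩
  · exact Or.inl ⟨i, by rw [Pi.single_neg, neg_neg]⟩

lemma walkP_neg (d n : ℕ) (x : Zd d) : walkP d n (-x) = walkP d n x := by
  induction n generalizing x with
  | zero => simp [walkP]
  | succ n ih =>
    simp only [walkP]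
    congr 1
    calc ∑ s ∈ stepSet d, walkP d n (-x - s)
        = ∑ s ∈ stepSet d, walkP d n (x - -s) := by
          refine Finset.sum_congr rfl fun s _ => ?_
          rw [← ih, neg_sub', neg_neg, sub_neg_eq_add]
      _ = ∑ s ∈ stepSet d, walkP d n (x - s) :=
          Finset.sum_nbij' Neg.neg Neg.neg (fun _ => neg_mem_stepSet) (fun _ => neg_mem_stepSet)
            (fun a _ => neg_neg a) (fun a _ => neg_neg a) (fun _ _ => rfl)

lemma green_neg (d : ℕ) (x : Zd d) : green d (-x) = green d x :=
  tsum_congr fun n => walkP_neg d n x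

lemma GreenK_succ (d k : ℕ) : GreenK d (k + 1) = conv (GreenK d k) (green d) := rfl

lemma Fklm_eq_tripleCorr (d k l m : ℕ) (z a b : Zd d) :
    Fklm d k l m z a b = tripleCorr (GreenK d k) (GreenK d l) (GreenK d m) z a b := by
  rw [Fklm, ← (Equiv.addLeft b).tsum_eq]
  refine tsum_congr fun v => ?_
  simp only [Equiv.coe_addLeft, show ∀ c, c - b + (b + v) = c + v from fun c => by abel]

theorem Fklm_convolution_identity_general (d k l m : ℕ) :
    ∀ z a b : Zd d,
      ∑' p : Zd d × Zd d,
        (green d p.1 * green d (p.1 - p.2) + green d p.2 * green d (p.1 - p.2)) *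
          Fklm d k l m z (a + p.1) (b + p.2)
      = Fklm d (k + 1) (l + 1) m z a b + Fklm d (k + 1) l (m + 1) z a b := by
  intro z a b
  simp only [Fklm_eq_tripleCorr, GreenK_succ, add_mul]
  rw [ENNReal.tsum_add, tsum_mul_tripleCorr_add_eq_conv_left_middle,
    ← tsum_mul_tripleCorr_add_eq_conv_left_right]
  congr 1
  refine tsum_congr fun p => ?_
  rw [← neg_sub p.2 p.1, green_neg]

/-- Claim 3.1. For `k, ℓ, m ≥ 1` and `d` large enough,
`∑_{y,y'} (g(y) g(y-y') + g(y') g(y-y')) F_{k,ℓ,m}(z, a+y, b+y')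
  = F_{k+1,ℓ+1,m}(z,a,b) + F_{k+1,ℓ,m+1}(z,a,b)`. -/
theorem Fklm_convolution_identity (d k l m : ℕ) (hk : 1 ≤ k) (hl : 1 ≤ l) (hm : 1 ≤ m)
    (hd1 : k + l + m + 2 < d) (hd2 : 2 * max k (max l m) + 2 < d) :
    ∀ z a b : Zd d,
      ∑' p : Zd d × Zd d,
        (green d p.1 * green d (p.1 - p.2) + green d p.2 * green d (p.1 - p.2)) *
          Fklm d k l m z (a + p.1) (b + p.2)
      = Fklm d (k + 1) (l + 1) m z a b + Fklm d (k + 1) l (m + 1) z a b :=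
  Fklm_convolution_identity_general d k l m
end

section
/- Let N ≥ 1 and d > 2N. Then the set-function f_N is strongly subadditive: for all finite sets A, B ⊆ ℤ^d (with the convention f_N(∅) = 0), f_N(A ∪ B) + f_N(A ∩ B) ≤ f_N(A) + f_N(B). -/
open MeasureTheory ProbabilityTheory Filter Pointwise
open scoped ENNReal Topology

/-!
For a fixed realisation `R = R¹_n + ⋯ + R^N_n`, the Minkowski sum distributes over unions,
`R + (A ∪ B) = (R + A) ∪ (R + B)`, and `R + (A ∩ B) ⊆ (R + A) ∩ (R + B)`; inclusion–exclusion
then gives `|R + (A ∪ B)| + |R + (A ∩ B)| ≤ |R + A| + |R + B|` for every `n` and every sample.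
Dividing by `n^N` and passing to the limit along one sample where all four limits exist
gives the inequality for `f_N`.
-/

theorem Set.ncard_add_union_add_ncard_add_inter_le {α : Type*} [Add α] {s t u : Set α}
    (ht : (s + t).Finite) (hu : (s + u).Finite) :
    (s + (t ∪ u)).ncard + (s + (t ∩ u)).ncard ≤ (s + t).ncard + (s + u).ncard := by
  have hinter : s + (t ∩ u) ⊆ (s + t) ∩ (s + u) :=
    Set.subset_inter (Set.add_subset_add_left Set.inter_subset_left)
      (Set.add_subset_add_left Set.inter_subset_right)
  calc (s + (t ∪ u)).ncard + (s + (t ∩ u)).ncard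
      ≤ ((s + t) ∪ (s + u)).ncard + ((s + t) ∩ (s + u)).ncard := by
        rw [Set.add_union]
        exact Nat.add_le_add_left (Set.ncard_le_ncard hinter (ht.inter_of_left _)) _
    _ = (s + t).ncard + (s + u).ncard := Set.ncard_union_add_ncard_inter _ _ ht hu

theorem Set.Finite.finsetSum {ι α : Type*} [AddCommMonoid α] (I : Finset ι) {f : ι → Set α}
    (hf : ∀ i ∈ I, (f i).Finite) : (∑ i ∈ I, f i).Finite :=
  Finset.sum_induction _ Set.Finite (fun _ _ => Set.Finite.add) Set.finite_zero hf

theorem rangeTo_finite {Ω : Type} {d : ℕ} (X : ℕ → Ω → Zd d) (n : ℕ) (ω : Ω) :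
    (rangeTo X n ω).Finite := by
  have : rangeTo X n ω = (fun k => X k ω) '' Set.Iic n := by
    ext y
    simp [rangeTo]
  exact this ▸ (Set.finite_Iic n).image _

theorem ncard_sum_rangeTo_add_union_add_inter_le {Ω : Type} {d N : ℕ}
    (X : Fin N → ℕ → Ω → Zd d) (n : ℕ) (ω : Ω) {A B : Set (Zd d)}
    (hA : A.Finite) (hB : B.Finite) :
    (((∑ i, rangeTo (X i) n ω) + (A ∪ B)).ncard : ℝ) +
        ((∑ i, rangeTo (X i) n ω) + (A ∩ B)).ncard
      ≤ ((∑ i, rangeTo (X i) n ω) + A).ncard + ((∑ i, rangeTo (X i) n ω) + B).ncard := by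
  have hR := Set.Finite.finsetSum Finset.univ fun i _ => rangeTo_finite (X i) n ω
  exact_mod_cast Set.ncard_add_union_add_ncard_add_inter_le (hR.add hA) (hR.add hB)

/-- strong subadditivity of `f_N`, equation (2.2). For `N ≥ 1`, `d > 2N`:
if `L_A, L_B, L_{A∪B}, L_{A∩B}` are the a.s. deterministic limits of
`|R¹_n + ⋯ + R^N_n + S|/n^N` for `S = A, B, A ∪ B, A ∩ B` respectively, then
`L_{A∪B} + L_{A∩B} ≤ L_A + L_B`. -/
theorem fN_strong_subadditivity (N d : ℕ)
    (Ω : Type) (_ : MeasurableSpace Ω) (P : Measure Ω) (hP : IsProbabilityMeasure P)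
    (X : Fin N → ℕ → Ω → Zd d)
    (A B : Set (Zd d)) (hA : A.Finite) (hB : B.Finite)
    (LA LB LU LI : ℝ)
    (hLA : ∀ᵐ ω ∂P, Tendsto
      (fun n : ℕ => (((∑ i, rangeTo (X i) n ω) + A).ncard : ℝ) / (n : ℝ) ^ N)
      atTop (𝓝 LA))
    (hLB : ∀ᵐ ω ∂P, Tendsto
      (fun n : ℕ => (((∑ i, rangeTo (X i) n ω) + B).ncard : ℝ) / (n : ℝ) ^ N)
      atTop (𝓝 LB))
    (hLU : ∀ᵐ ω ∂P, Tendsto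
      (fun n : ℕ => (((∑ i, rangeTo (X i) n ω) + (A ∪ B)).ncard : ℝ) / (n : ℝ) ^ N)
      atTop (𝓝 LU))
    (hLI : ∀ᵐ ω ∂P, Tendsto
      (fun n : ℕ => (((∑ i, rangeTo (X i) n ω) + (A ∩ B)).ncard : ℝ) / (n : ℝ) ^ N)
      atTop (𝓝 LI)) :
    LU + LI ≤ LA + LB := by
  obtain ⟨ω, ⟨hωA, hωB⟩, hωU, hωI⟩ := ((hLA.and hLB).and (hLU.and hLI)).exists
  refine le_of_tendsto_of_tendsto' (hωU.add hωI) (hωA.add hωB) fun n => ?_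
  rw [← add_div, ← add_div]
  exact div_le_div_of_nonneg_right (ncard_sum_rangeTo_add_union_add_inter_le X n ω hA hB)
    (by positivity)
end
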